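/- arXiv:2501.16172 — 4 statements merged into one kernel-verified Lean document; each statement's English description precedes it below -/
import Mathlib

section
/- For a Weyl group W with parabolic subgroup W_P, and any u, w in W and v in W_P: u ≤_P w if and only if uv ≤_P wv, where ≤_P is the extended P-Bruhat order (the transitive closure of the relations u →_P w meaning w = u·s_α for some positive root α not in the positive roots of W_P with ℓ(w) > ℓ(u)). -/
/-!
STATEMENT 0: For a Weyl group `W` (formalized as a finite Coxeter group given by a
`CoxeterSystem`) with parabolic subgroup `W_P` (generated by a subset `J` of the simple
reflections), and any `u w ∈ W` and `v ∈ W_P`:  `u ≤_P w ↔ u*v ≤_P w*v`, where `≤_P` is the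
extended `P`-Bruhat order: the reflexive-transitive closure of `u →_P w` meaning
`w = u * s_α` for a reflection `s_α` with `α ∈ R⁺ \ R_P⁺` (equivalently, a reflection not
lying in `W_P`) such that `ℓ(w) > ℓ(u)`.
-/

open CoxeterSystem

variable {B W : Type*} [Group W]

/-- The parabolic subgroup `W_P` generated by the simple reflections indexed by `J`. -/
def parabolicSubgroup {M : CoxeterMatrix B} (cs : CoxeterSystem M W) (J : Set B) : Subgroup W :=
  Subgroup.closure (cs.simple '' J)

/-- One step of the extended `P`-Bruhat order: right multiplication by a reflection `s_α`
with `α ∈ R⁺ \ R_P⁺` (i.e. a reflection of `W` not lying in `W_P`) that increases length. -/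
def extPStep {M : CoxeterMatrix B} (cs : CoxeterSystem M W) (J : Set B) (u w : W) : Prop :=
  ∃ t : W, cs.IsReflection t ∧ t ∉ parabolicSubgroup cs J ∧ w = u * t ∧
    cs.length u < cs.length w

/-- The extended `P`-Bruhat order `≤_P`: the reflexive-transitive closure of `extPStep`. -/
def extPLE {M : CoxeterMatrix B} (cs : CoxeterSystem M W) (J : Set B) : W → W → Prop :=
  Relation.ReflTransGen (extPStep cs J)

/-!
Since `W_P` is generated by the simple reflections `s_i`, `i ∈ J`, which are involutions, it
suffices to show that `u →_P w` implies `u s_i →_P w s_i`. If `w = u t`, then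
`w s_i = u s_i · (s_i t s_i)` with `s_i t s_i` again a reflection outside `W_P`, and what has to
be shown is `ℓ(u s_i) < ℓ(u t s_i)`; here `t ≠ s_i` because `t ∉ W_P`.

Let `η(w, t) ∈ ZMod 2` be the parity of the number of occurrences of `t` in the right inversion
sequence of a word for `w`. It does not depend on the word, because it is read off the action of
`w` on `W × ZMod 2` in which `s_i` acts by `(t, ε) ↦ (s_i t s_i, ε + [t = s_i])`
(Björner–Brenti, Thm. 1.3.2). For a reflection `t` this gives the strong exchange property
`η(w, t) = 1 ↔ ℓ(w t) < ℓ(w)`, and the action gives the cocycle identity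
`η(x s_i, t) = η(x, s_i t s_i) + η(s_i, t)`. With `x = u t s_i` the left side is `1` and
`η(s_i, t) = 0`, so `η(u t s_i, s_i t s_i) = 1`, i.e. `ℓ(u s_i) < ℓ(u t s_i)`.
-/

namespace CoxeterSystem

variable {M : CoxeterMatrix B} (cs : CoxeterSystem M W)

theorem simple_mul_pow_mul_simple (i i' : B) (k : ℕ) :
    cs.simple i' * (cs.simple i * cs.simple i') ^ k * cs.simple i' =
      ((cs.simple i * cs.simple i') ^ k)⁻¹ :=
  calc cs.simple i' * (cs.simple i * cs.simple i') ^ k * cs.simple i'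
      = (cs.simple i' * (cs.simple i * cs.simple i') * (cs.simple i')⁻¹) ^ k := by
        rw [conj_pow, cs.inv_simple]
    _ = ((cs.simple i * cs.simple i') ^ k)⁻¹ := by
        simp [← inv_pow, mul_assoc]

theorem conj_pow_inv_mul_simple (i i' : B) (a k : ℕ) :
    ((cs.simple i * cs.simple i') ^ k)⁻¹ *
        (((cs.simple i * cs.simple i') ^ a)⁻¹ * cs.simple i') *
        (cs.simple i * cs.simple i') ^ k =
      ((cs.simple i * cs.simple i') ^ (a + 2 * k))⁻¹ * cs.simple i' := by
  have h : cs.simple i' * (cs.simple i * cs.simple i') ^ k =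
      ((cs.simple i * cs.simple i') ^ k)⁻¹ * cs.simple i' := by
    rw [← cs.simple_mul_pow_mul_simple i i' k, cs.simple_mul_simple_cancel_right]
  simp only [mul_assoc, h]
  group

section SignedConjugation

variable [DecidableEq W]

def simpleSignedConj (i : B) : Equiv.Perm (W × ZMod 2) :=
  Function.Involutive.toPerm
    (fun p => (cs.simple i * p.1 * cs.simple i, p.2 + if p.1 = cs.simple i then 1 else 0))
    (by
      rintro ⟨t, ε⟩
      have hconj : cs.simple i * t * cs.simple i = cs.simple i ↔ t = cs.simple i := by
        rw [mul_eq_right, mul_eq_one_iff_inv_eq, cs.inv_simple, eq_comm]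
      ext
      · simp [← mul_assoc]
      · simp only [hconj, add_assoc]
        split_ifs <;> simp [CharTwo.add_self_eq_zero])

theorem simpleSignedConj_apply (i : B) (t : W) (ε : ZMod 2) :
    cs.simpleSignedConj i (t, ε) =
      (cs.simple i * t * cs.simple i, ε + if t = cs.simple i then 1 else 0) := rfl

theorem simpleSignedConj_mul_pow_apply (i i' : B) (k : ℕ) (t : W) (ε : ZMod 2) :
    ((cs.simpleSignedConj i * cs.simpleSignedConj i') ^ k) (t, ε) =
      ((cs.simple i * cs.simple i') ^ k * t * ((cs.simple i * cs.simple i') ^ k)⁻¹,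
        ε + ∑ b ∈ Finset.range (2 * k),
          if t = ((cs.simple i * cs.simple i') ^ b)⁻¹ * cs.simple i' then 1 else 0) := by
  induction k with
  | zero => simp
  | succ k ih =>
    have hconj := cs.conj_pow_inv_mul_simple i i'
    have hs (z : W) : cs.simple i * (cs.simple i' * z * cs.simple i') * cs.simple i =
        (cs.simple i * cs.simple i') * z * (cs.simple i * cs.simple i')⁻¹ := by
      simp [mul_assoc]
    have hs' : cs.simple i' * cs.simple i * cs.simple i' =
        ((cs.simple i * cs.simple i') ^ 1)⁻¹ * cs.simple i' := by
      simp [mul_assoc]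
    rw [pow_succ', Equiv.Perm.mul_apply, ih, Equiv.Perm.mul_apply, simpleSignedConj_apply,
      simpleSignedConj_apply, hs, show 2 * (k + 1) = 2 * k + 1 + 1 by ring,
      Finset.sum_range_succ, Finset.sum_range_succ]
    generalize cs.simple i * cs.simple i' = x at *
    have hy (a : ℕ) : x ^ k * t * (x ^ k)⁻¹ = (x ^ a)⁻¹ * cs.simple i' ↔
        t = (x ^ (a + 2 * k))⁻¹ * cs.simple i' := by
      rw [← hconj a k]
      constructor <;> intro h
      · rw [← h]; group
      · rw [h]; group
    have h₀ : x ^ k * t * (x ^ k)⁻¹ = cs.simple i' ↔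
        t = (x ^ (2 * k))⁻¹ * cs.simple i' := by
      simpa using hy 0
    have h₁ : cs.simple i' * (x ^ k * t * (x ^ k)⁻¹) * cs.simple i' = cs.simple i ↔
        t = (x ^ (2 * k + 1))⁻¹ * cs.simple i' := by
      rw [add_comm, ← hy 1, ← hs']
      constructor <;> intro h
      · simp [← h, mul_assoc]
      · simp [h, mul_assoc]
    rw [if_congr h₀ rfl rfl, if_congr h₁ rfl rfl]
    ext
    · group
    · simp only [add_assoc]

theorem isLiftable_simpleSignedConj : M.IsLiftable cs.simpleSignedConj := by
  intro i i'
  ext ⟨t, ε⟩ : 1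
  have hx := cs.simple_mul_simple_pow i i'
  have hperiod (b : ℕ) : ((cs.simple i * cs.simple i') ^ (M i i' + b))⁻¹ =
      ((cs.simple i * cs.simple i') ^ b)⁻¹ := by
    rw [pow_add, hx, one_mul]
  rw [simpleSignedConj_mul_pow_apply, hx, two_mul, Finset.sum_range_add]
  simp [hperiod, CharTwo.add_self_eq_zero]

def signedConj : W →* Equiv.Perm (W × ZMod 2) :=
  cs.lift ⟨cs.simpleSignedConj, cs.isLiftable_simpleSignedConj⟩

theorem signedConj_simple (i : B) : cs.signedConj (cs.simple i) = cs.simpleSignedConj i :=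
  cs.lift_apply_simple _ i

theorem signedConj_wordProd_apply (ω : List B) (t : W) (ε : ZMod 2) :
    cs.signedConj (cs.wordProd ω) (t, ε) =
      (cs.wordProd ω * t * (cs.wordProd ω)⁻¹, ε + (cs.rightInvSeq ω).count t) := by
  induction ω with
  | nil => simp
  | cons i ω ih =>
    have hcond : cs.wordProd ω * t * (cs.wordProd ω)⁻¹ = cs.simple i ↔
        (cs.wordProd ω)⁻¹ * cs.simple i * cs.wordProd ω = t := by
      constructor <;> intro h
      · rw [← h]; group
      · rw [← h]; group
    rw [cs.wordProd_cons, map_mul, Equiv.Perm.mul_apply, ih, signedConj_simple,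
      simpleSignedConj_apply, if_congr hcond rfl rfl]
    ext
    · simp [mul_assoc]
    · simp only [rightInvSeq, List.count_cons, beq_iff_eq]
      split_ifs <;> push_cast <;> ring

def inversionParity (w t : W) : ZMod 2 := (cs.signedConj w (t, 0)).2

theorem inversionParity_wordProd (ω : List B) (t : W) :
    cs.inversionParity (cs.wordProd ω) t = (cs.rightInvSeq ω).count t := by
  simp [inversionParity, signedConj_wordProd_apply]

theorem signedConj_apply (w t : W) (ε : ZMod 2) :
    cs.signedConj w (t, ε) = (w * t * w⁻¹, ε + cs.inversionParity w t) := by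
  obtain ⟨ω, rfl⟩ := cs.wordProd_surjective w
  rw [inversionParity_wordProd, signedConj_wordProd_apply]

theorem inversionParity_mul (w w' t : W) :
    cs.inversionParity (w * w') t =
      cs.inversionParity w (w' * t * w'⁻¹) + cs.inversionParity w' t := by
  rw [inversionParity, map_mul, Equiv.Perm.mul_apply, signedConj_apply, signedConj_apply,
    zero_add, add_comm]

theorem inversionParity_one (t : W) : cs.inversionParity 1 t = 0 := by
  simp [inversionParity]

theorem inversionParity_simple (i : B) (t : W) :
    cs.inversionParity (cs.simple i) t = if t = cs.simple i then 1 else 0 := by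
  simp [inversionParity, signedConj_simple, simpleSignedConj_apply]

theorem mem_rightInvSeq_of_inversionParity_eq_one {ω : List B} {t : W}
    (h : cs.inversionParity (cs.wordProd ω) t = 1) : t ∈ cs.rightInvSeq ω := by
  rw [inversionParity_wordProd] at h
  refine List.count_pos_iff.mp (Nat.pos_of_ne_zero fun h0 => ?_)
  simp [h0] at h

theorem length_mul_lt_of_inversionParity_eq_one {w t : W} (h : cs.inversionParity w t = 1) :
    cs.length (w * t) < cs.length w := by
  obtain ⟨ω, hω, rfl⟩ := cs.exists_isReduced w
  exact (cs.isRightInversion_of_mem_rightInvSeq hω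
    (cs.mem_rightInvSeq_of_inversionParity_eq_one h)).2

namespace IsReflection

variable {cs} {t : W} (ht : cs.IsReflection t)
include ht

theorem inversionParity_self : cs.inversionParity t t = 1 := by
  obtain ⟨v, i, rfl⟩ := ht
  have h₁ := cs.inversionParity_mul (v * cs.simple i) v⁻¹ (v * cs.simple i * v⁻¹)
  have h₂ := cs.inversionParity_mul v (cs.simple i) (cs.simple i)
  have h₃ := cs.inversionParity_mul v v⁻¹ (v * cs.simple i * v⁻¹)
  have hconj : v⁻¹ * (v * cs.simple i * v⁻¹) * v = cs.simple i := by group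
  rw [inv_inv, hconj] at h₁ h₃
  rw [mul_inv_cancel_right, inversionParity_simple, if_pos rfl] at h₂
  rw [mul_inv_cancel, inversionParity_one] at h₃
  linear_combination h₁ + h₂ - h₃

theorem inversionParity_mul_self (w : W) :
    cs.inversionParity (w * t) t = cs.inversionParity w t + 1 := by
  rw [inversionParity_mul, mul_inv_cancel_right, ht.inversionParity_self]

theorem inversionParity_eq_one_iff (w : W) :
    cs.inversionParity w t = 1 ↔ cs.length (w * t) < cs.length w := by
  refine ⟨cs.length_mul_lt_of_inversionParity_eq_one, fun hlt => ?_⟩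
  by_contra hne
  have hzero : ∀ z : ZMod 2, z ≠ 1 → z + 1 = 1 := by decide
  have h : cs.inversionParity (w * t) t = 1 := by
    rw [ht.inversionParity_mul_self, hzero _ hne]
  have := cs.length_mul_lt_of_inversionParity_eq_one h
  rw [mul_assoc, ht.mul_self, mul_one] at this
  exact lt_asymm hlt this

end IsReflection

end SignedConjugation

namespace IsReflection

variable {cs} {t : W}

theorem length_mul_simple_lt_length_mul_mul_simple (ht : cs.IsReflection t) {u : W} {i : B}
    (hlt : cs.length u < cs.length (u * t)) (hne : t ≠ cs.simple i) :
    cs.length (u * cs.simple i) < cs.length (u * t * cs.simple i) := by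
  classical
  by_contra hle
  have hutt : u * t * t = u := by rw [mul_assoc, ht.mul_self, mul_one]
  have h₁ : cs.inversionParity (u * t) t = 1 := by
    rwa [ht.inversionParity_eq_one_iff, hutt]
  have h₂ : cs.inversionParity (u * t * cs.simple i) (cs.simple i * t * cs.simple i) ≠ 1 := by
    have hconj := ht.conj (cs.simple i)
    rw [cs.inv_simple] at hconj
    rwa [Ne, hconj.inversionParity_eq_one_iff, show
      u * t * cs.simple i * (cs.simple i * t * cs.simple i) = u * cs.simple i by
        simp [← mul_assoc, hutt]]
  have h := cs.inversionParity_mul (u * t * cs.simple i) (cs.simple i) t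
  rw [cs.simple_mul_simple_cancel_right, h₁, cs.inv_simple, cs.inversionParity_simple,
    if_neg hne, add_zero] at h
  exact h₂ h.symm

end IsReflection

end CoxeterSystem

theorem simple_mem_parabolicSubgroup {M : CoxeterMatrix B} (cs : CoxeterSystem M W) {J : Set B}
    {i : B} (hi : i ∈ J) : cs.simple i ∈ parabolicSubgroup cs J :=
  Subgroup.subset_closure ⟨i, hi, rfl⟩

theorem extPStep_mul_simple {M : CoxeterMatrix B} (cs : CoxeterSystem M W) {J : Set B} {u w : W}
    {i : B} (hi : i ∈ J) (h : extPStep cs J u w) :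
    extPStep cs J (u * cs.simple i) (w * cs.simple i) := by
  obtain ⟨t, ht, htJ, rfl, hlt⟩ := h
  have hiJ := simple_mem_parabolicSubgroup cs hi
  refine ⟨cs.simple i * t * cs.simple i, ?_, fun hmem => htJ ?_, by simp [mul_assoc], ?_⟩
  · simpa using ht.conj (cs.simple i)
  · simpa [mul_assoc] using mul_mem (mul_mem hiJ hmem) hiJ
  · exact ht.length_mul_simple_lt_length_mul_mul_simple hlt fun h => htJ (h ▸ hiJ)

theorem extPLE_mul_simple {M : CoxeterMatrix B} (cs : CoxeterSystem M W) {J : Set B} {u w : W}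
    {i : B} (hi : i ∈ J) (h : extPLE cs J u w) :
    extPLE cs J (u * cs.simple i) (w * cs.simple i) :=
  Relation.ReflTransGen.lift (· * cs.simple i) (fun _ _ => extPStep_mul_simple cs hi) _ _ h

theorem extPLE_right_mul_invariant_general {M : CoxeterMatrix B}
    (cs : CoxeterSystem M W) (J : Set B) (u w v : W)
    (hv : v ∈ parabolicSubgroup cs J) :
    extPLE cs J u w ↔ extPLE cs J (u * v) (w * v) := by
  induction hv using Subgroup.closure_induction generalizing u w with
  | mem _ hs =>
    obtain ⟨i, hi, rfl⟩ := hs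
    refine ⟨extPLE_mul_simple cs hi, fun h => ?_⟩
    simpa using extPLE_mul_simple cs hi h
  | one => simp
  | mul x y _ _ ihx ihy =>
    rw [← mul_assoc, ← mul_assoc]
    exact (ihx u w).trans (ihy _ _)
  | inv x _ ihx => simpa using (ihx (u * x⁻¹) (w * x⁻¹)).symm

theorem extPLE_right_mul_invariant [Finite W] {M : CoxeterMatrix B}
    (cs : CoxeterSystem M W) (J : Set B) (u w v : W)
    (hv : v ∈ parabolicSubgroup cs J) :
    extPLE cs J u w ↔ extPLE cs J (u * v) (w * v) :=
  extPLE_right_mul_invariant_general cs J u w v hv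
end

section
/- For a Weyl group W with parabolic subgroup W_P, if w ∈ W^P (the set of minimal-length coset representatives of W/W_P), then for any u ∈ W, u ≤_P w if and only if u ≤ w in the Bruhat order. -/
/-!
The forward implication is immediate. For the converse it suffices that whenever `u < w` in the
Bruhat order, some right inversion `t` of `w` (a reflection with `ℓ(wt) < ℓ(w)`) satisfies
`u < ut ≤ w`: iterating yields a chain from `u` up to `w` by right inversions of `w`, and none of
these lies in `W_P` because `w` has minimal length in `w W_P`.

That existence statement follows by induction on `ℓ(w)` from the lifting property of the Bruhat
order at a right descent `s` of `w`. The lifting property and the subword property are proved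
together by induction on length, and both rest on the strong exchange condition, which comes from
Tits' representation of `W` on `W × ZMod 2`: the parity of the number of occurrences of `t` in
the right inversion sequence of a word depends only on the element it represents.
-/

open CoxeterSystem

variable {B W : Type*} [Group W]

/-- The ordinary Bruhat order on `W`: reflexive-transitive closure of right multiplication
by any reflection increasing length. -/
def bruhatLE {M : CoxeterMatrix B} (cs : CoxeterSystem M W) : W → W → Prop :=
  Relation.ReflTransGen
    (fun u w => ∃ t : W, cs.IsReflection t ∧ w = u * t ∧ cs.length u < cs.length w)

/-- `w` is a minimal-length representative of its coset `w * W_P`, i.e. `w ∈ W^P`. -/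
def isMinimalRep {M : CoxeterMatrix B} (cs : CoxeterSystem M W) (J : Set B) (w : W) : Prop :=
  ∀ v ∈ parabolicSubgroup cs J, cs.length w ≤ cs.length (w * v)

namespace CoxeterSystem

variable {M : CoxeterMatrix B} (cs : CoxeterSystem M W)

local prefix:100 "s " => cs.simple
local prefix:100 "π " => cs.wordProd
local prefix:100 "ℓ " => cs.length
local prefix:100 "ris " => cs.rightInvSeq

section SignRepresentation

open scoped Classical

noncomputable def reflectionPerm (i : B) : Equiv.Perm (W × ZMod 2) :=
  Function.Involutive.toPerm (fun p => (s i * p.1 * s i, p.2 + if p.1 = s i then 1 else 0))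
    (by
      rintro ⟨t, e⟩
      have hconj : s i * t * s i = s i ↔ t = s i := by
        constructor
        · intro h
          calc t = s i * (s i * t * s i) * s i := by simp [← mul_assoc]
            _ = s i := by rw [h]; simp
        · rintro rfl
          simp
      refine Prod.ext ?_ ?_
      · simp [← mul_assoc]
      · simp only [hconj, add_assoc, CharTwo.add_self_eq_zero, add_zero])

lemma reflectionPerm_apply (i : B) (t : W) (e : ZMod 2) :
    cs.reflectionPerm i (t, e) = (s i * t * s i, e + if t = s i then 1 else 0) :=
  rfl

lemma prod_map_reflectionPerm_apply (ω : List B) (t : W) (e : ZMod 2) :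
    (ω.map cs.reflectionPerm).prod (t, e) =
      (π ω * t * (π ω)⁻¹, e + ((ris ω).count t : ZMod 2)) := by
  induction ω generalizing e with
  | nil => simp
  | cons i ω ih =>
    have hconj : π ω * t * (π ω)⁻¹ = s i ↔ (π ω)⁻¹ * s i * π ω = t := by
      constructor <;> intro h <;> rw [← h] <;> group
    rw [List.map_cons, List.prod_cons, Equiv.Perm.mul_apply, ih, reflectionPerm_apply]
    simp only [rightInvSeq, List.count_cons, beq_iff_eq, hconj, wordProd_cons, mul_inv_rev,
      inv_simple, Nat.cast_add, Prod.mk.injEq]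
    refine ⟨by group, ?_⟩
    split_ifs <;> simp [add_assoc]

lemma alternatingWord_two_mul_succ (i j : B) (k : ℕ) :
    alternatingWord i j (2 * (k + 1)) = i :: j :: alternatingWord i j (2 * k) := by
  rw [show 2 * (k + 1) = 2 * k + 1 + 1 by ring, alternatingWord_succ', alternatingWord_succ']
  simp

lemma prod_map_alternatingWord_two_mul {G : Type*} [Monoid G] (f : B → G) (i j : B) (k : ℕ) :
    ((alternatingWord i j (2 * k)).map f).prod = (f i * f j) ^ k := by
  induction k with
  | zero => simp [alternatingWord]
  | succ k ih => rw [alternatingWord_two_mul_succ, pow_succ', ← ih]; simp [mul_assoc]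

lemma rightInvSeq_alternatingWord_two_mul (i j : B) (k : ℕ) :
    ris (alternatingWord i j (2 * k)) =
      ((List.range (2 * k)).map fun e => s i * (s i * s j) ^ (e + 1)).reverse := by
  induction k with
  | zero => simp [alternatingWord]
  | succ k ih =>
    have hprod : π (alternatingWord i j (2 * k)) = (s i * s j) ^ k :=
      prod_map_alternatingWord_two_mul cs.simple i j k
    set g := s i * s j with hg
    have hflip (n : ℕ) : (g ^ n)⁻¹ * s i = s i * g ^ n := by
      induction n with
      | zero => simp
      | succ n ih =>
        have hstep : g⁻¹ * s i = s i * g := by simp [hg, ← mul_assoc]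
        rw [pow_succ, mul_inv_rev, mul_assoc, ih, ← mul_assoc, hstep, mul_assoc, ← pow_succ',
          pow_succ]
    have hconj (n m : ℕ) : (g ^ n)⁻¹ * s i * g ^ m = s i * g ^ (n + m) := by
      rw [hflip, mul_assoc, ← pow_add]
    have hj : s j = s i * g ^ 1 := by simp [hg, ← mul_assoc]
    have hjg : s j * g ^ k = s i * g ^ (k + 1) := by rw [hj, mul_assoc, ← pow_add, add_comm]
    rw [alternatingWord_two_mul_succ, show 2 * (k + 1) = 2 * k + 1 + 1 by ring,
      List.range_succ, List.range_succ]
    simp only [rightInvSeq, ih, wordProd_cons, hprod, List.map_append, List.map_cons,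
      List.map_nil, List.reverse_append, List.reverse_singleton, List.singleton_append]
    rw [List.cons.injEq, List.cons.injEq]
    refine ⟨?_, ?_, rfl⟩
    · rw [hjg, mul_inv_rev, inv_simple, mul_assoc _ (s i) (s i), simple_mul_simple_self, mul_one,
        ← mul_assoc, hconj, show k + 1 + (k + 1) = 2 * k + 1 + 1 by ring]
    · rw [hj, ← mul_assoc, hconj, mul_assoc, ← pow_add, show k + 1 + k = 2 * k + 1 by ring]

lemma natCast_count_rightInvSeq_alternatingWord_eq_zero (i j : B) (t : W) :
    ((ris (alternatingWord i j (2 * M i j))).count t : ZMod 2) = 0 := by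
  have hperiod (e : ℕ) : s i * (s i * s j) ^ (M i j + e + 1) = s i * (s i * s j) ^ (e + 1) := by
    rw [add_assoc, pow_add, simple_mul_simple_pow, one_mul]
  rw [rightInvSeq_alternatingWord_two_mul, List.count_reverse, two_mul, List.range_add,
    List.map_append, List.map_map]
  simp only [Function.comp_def, hperiod, List.count_append, Nat.cast_add,
    CharTwo.add_self_eq_zero]

lemma isLiftable_reflectionPerm : M.IsLiftable cs.reflectionPerm := by
  intro i j
  rw [← prod_map_alternatingWord_two_mul]
  refine Equiv.ext fun ⟨t, e⟩ => ?_
  have hprod : π (alternatingWord i j (2 * M i j)) = 1 := by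
    rw [wordProd, prod_map_alternatingWord_two_mul, simple_mul_simple_pow]
  rw [prod_map_reflectionPerm_apply, hprod, natCast_count_rightInvSeq_alternatingWord_eq_zero]
  simp

noncomputable def reflectionRep : W →* Equiv.Perm (W × ZMod 2) :=
  cs.lift ⟨cs.reflectionPerm, cs.isLiftable_reflectionPerm⟩

lemma reflectionRep_wordProd (ω : List B) :
    cs.reflectionRep (π ω) = (ω.map cs.reflectionPerm).prod := by
  rw [wordProd, map_list_prod, List.map_map]
  congr 2
  funext i
  exact cs.lift_apply_simple cs.isLiftable_reflectionPerm i

noncomputable def reflectionParity (w t : W) : ZMod 2 :=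
  (cs.reflectionRep w (t, 0)).2

lemma reflectionParity_wordProd (ω : List B) (t : W) :
    cs.reflectionParity (π ω) t = (ris ω).count t := by
  simp [reflectionParity, reflectionRep_wordProd, prod_map_reflectionPerm_apply]

lemma reflectionRep_apply (w t : W) (e : ZMod 2) :
    cs.reflectionRep w (t, e) = (w * t * w⁻¹, e + cs.reflectionParity w t) := by
  obtain ⟨ω, rfl⟩ := cs.wordProd_surjective w
  rw [reflectionParity_wordProd, reflectionRep_wordProd, prod_map_reflectionPerm_apply]

lemma reflectionParity_mul (v w t : W) :
    cs.reflectionParity (v * w) t =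
      cs.reflectionParity w t + cs.reflectionParity v (w * t * w⁻¹) := by
  have h := congrArg (fun f => (f (t, 0)).2) (map_mul cs.reflectionRep v w)
  simp only [Equiv.Perm.mul_apply, reflectionRep_apply, zero_add] at h
  exact h

lemma reflectionParity_one (t : W) : cs.reflectionParity 1 t = 0 := by
  simp [reflectionParity]

lemma reflectionParity_self {t : W} (ht : cs.IsReflection t) : cs.reflectionParity t t = 1 := by
  obtain ⟨u, i, rfl⟩ := ht
  have hsimple : cs.reflectionParity (s i) (s i) = 1 := by
    simpa using cs.reflectionParity_wordProd [i] (s i)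
  have hinv := cs.reflectionParity_mul u u⁻¹ (u * s i * u⁻¹)
  rw [mul_inv_cancel, reflectionParity_one] at hinv
  rw [cs.reflectionParity_mul (u * s i) u⁻¹, cs.reflectionParity_mul u (s i)]
  simp only [inv_inv, show u⁻¹ * (u * s i * u⁻¹) * u = s i by group,
    show s i * s i * (s i)⁻¹ = s i by group] at hinv ⊢
  rw [hsimple]
  linear_combination -hinv

lemma reflectionParity_mul_self {t : W} (ht : cs.IsReflection t) (w : W) :
    cs.reflectionParity (w * t) t = cs.reflectionParity w t + 1 := by
  rw [reflectionParity_mul, reflectionParity_self cs ht, ht.mul_self, one_mul, ht.inv, add_comm]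

lemma mem_rightInvSeq_of_reflectionParity_ne_zero {ω : List B} {t : W}
    (h : cs.reflectionParity (π ω) t ≠ 0) : t ∈ ris ω := by
  rw [reflectionParity_wordProd] at h
  exact List.count_pos_iff.mp (Nat.pos_of_ne_zero fun h0 => h (by simp [h0]))

end SignRepresentation

lemma length_mul_lt_of_reflectionParity_ne_zero {w t : W} (h : cs.reflectionParity w t ≠ 0) :
    ℓ (w * t) < ℓ w := by
  obtain ⟨ω, hω, rfl⟩ := cs.exists_isReduced w
  exact (cs.isRightInversion_of_mem_rightInvSeq hω
    (cs.mem_rightInvSeq_of_reflectionParity_ne_zero h)).2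

lemma reflectionParity_ne_zero_of_length_mul_lt {w t : W} (ht : cs.IsReflection t)
    (h : ℓ (w * t) < ℓ w) : cs.reflectionParity w t ≠ 0 := by
  intro h0
  have hlt : ℓ (w * t * t) < ℓ (w * t) :=
    cs.length_mul_lt_of_reflectionParity_ne_zero <| by
      rw [reflectionParity_mul_self cs ht, h0]
      decide
  rw [mul_assoc, ht.mul_self, mul_one] at hlt
  omega

theorem mem_rightInvSeq_of_length_mul_lt {ω : List B} {t : W} (ht : cs.IsReflection t)
    (h : ℓ (π ω * t) < ℓ (π ω)) : t ∈ ris ω :=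
  cs.mem_rightInvSeq_of_reflectionParity_ne_zero
    (cs.reflectionParity_ne_zero_of_length_mul_lt ht h)

theorem exists_eraseIdx_of_length_mul_lt {ω : List B} {t : W} (ht : cs.IsReflection t)
    (h : ℓ (π ω * t) < ℓ (π ω)) : ∃ j, π ω * t = π (ω.eraseIdx j) := by
  obtain ⟨j, hj, rfl⟩ := List.mem_iff_getElem.mp (cs.mem_rightInvSeq_of_length_mul_lt ht h)
  exact ⟨j, by rw [← List.getD_eq_getElem _ 1 hj, wordProd_mul_getD_rightInvSeq]⟩

variable {cs}

lemma bruhatLE_mul_of_isReflection {u t : W} (ht : cs.IsReflection t) (h : ℓ u < ℓ (u * t)) :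
    bruhatLE cs u (u * t) :=
  .single ⟨t, ht, rfl, h⟩

lemma mul_simple_bruhatLE_self {w : W} {i : B} (h : ℓ (w * s i) < ℓ w) :
    bruhatLE cs (w * s i) w := by
  simpa using
    bruhatLE_mul_of_isReflection (u := w * s i) (cs.isReflection_simple i) (by simpa using h)

lemma length_le_of_bruhatLE {u w : W} (h : bruhatLE cs u w) : ℓ u ≤ ℓ w := by
  induction h with
  | refl => rfl
  | tail _ hstep ih => obtain ⟨t, -, -, hl⟩ := hstep; omega

lemma eq_of_bruhatLE_of_length_le {u w : W} (h : bruhatLE cs u w) (hl : ℓ w ≤ ℓ u) :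
    u = w := by
  rcases h.cases_tail with rfl | ⟨z, hz, t, -, -, hzw⟩
  · rfl
  · have := length_le_of_bruhatLE hz
    omega

theorem exists_sublist_of_bruhatLE {u w : W} (h : bruhatLE cs u w) {ω : List B}
    (hω : π ω = w) : ∃ μ, μ.Sublist ω ∧ π μ = u := by
  induction h generalizing ω with
  | refl => exact ⟨ω, .refl ω, hω⟩
  | tail _ hstep ih =>
    obtain ⟨t, ht, rfl, hl⟩ := hstep
    have hdown : ℓ (π ω * t) < ℓ (π ω) := by rwa [hω, mul_assoc, ht.mul_self, mul_one]
    obtain ⟨j, hj⟩ := cs.exists_eraseIdx_of_length_mul_lt ht hdown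
    obtain ⟨μ, hμ, rfl⟩ :=
      ih (ω := ω.eraseIdx j) (by rw [← hj, hω, mul_assoc, ht.mul_self, mul_one])
    exact ⟨μ, hμ.trans (ω.eraseIdx_sublist j), rfl⟩

lemma mul_simple_bruhatLE_mul_simple_of_isReflection {x t : W} {i : B} (ht : cs.IsReflection t)
    (hxt : ℓ x < ℓ (x * t)) (hi : ℓ (x * t) < ℓ (x * t * s i)) :
    bruhatLE cs (x * s i) (x * t * s i) := by
  have hreorder : x * t * s i = x * s i * (s i * t * (s i)⁻¹) := by simp [← mul_assoc]
  rw [hreorder] at hi ⊢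
  refine bruhatLE_mul_of_isReflection (ht.conj (s i)) ?_
  have := cs.length_mul_le x (s i)
  rw [length_simple] at this
  rcases cs.length_mul_simple (x * t) i with h | h <;> omega

variable (cs) in
def LiftsBelow (n : ℕ) : Prop :=
  ∀ ⦃x y : W⦄ (i : B), ℓ y < n → bruhatLE cs x y → ℓ y < ℓ (y * s i) →
    bruhatLE cs (x * s i) (y * s i)

theorem LiftsBelow.bruhatLE_wordProd_of_sublist {n : ℕ} (hn : cs.LiftsBelow n) {ω μ : List B}
    (hω : cs.IsReduced ω) (hlen : ω.length ≤ n) (hμ : μ.Sublist ω) :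
    bruhatLE cs (π μ) (π ω) := by
  induction ω using List.reverseRecOn generalizing μ with
  | nil => rw [List.sublist_nil.mp hμ]; exact .refl
  | append_singleton ω i ih =>
    have hω' : cs.IsReduced ω := by simpa using hω.take ω.length
    have hωlen : ℓ (π ω) = ω.length := hω'
    have hup : ℓ (π ω) < ℓ (π ω * s i) := by
      have : ℓ (π (ω ++ [i])) = ω.length + 1 := by simpa using hω.eq
      rw [wordProd_append, wordProd_singleton] at this
      omega
    have hlen' : ω.length < n := by simp at hlen; omega
    obtain ⟨μ', ν, rfl, hμ', hν⟩ := List.sublist_append_iff.mp hμ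
    have hbelow := ih hω' hlen'.le hμ'
    rw [wordProd_append, wordProd_append, wordProd_singleton]
    rcases List.sublist_singleton.mp hν with rfl | rfl
    · rw [wordProd_nil, mul_one]
      exact hbelow.trans (bruhatLE_mul_of_isReflection (cs.isReflection_simple i) hup)
    · rw [wordProd_singleton]
      exact hn i (by omega) hbelow hup

theorem LiftsBelow.bruhatLE_or_mul_simple_bruhatLE {n : ℕ} (hn : cs.LiftsBelow n) {a b : W}
    {i : B} (hb : ℓ b ≤ n) (hbi : ℓ (b * s i) < ℓ b) (hab : bruhatLE cs a b) :
    bruhatLE cs a (b * s i) ∨ bruhatLE cs (a * s i) (b * s i) := by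
  obtain ⟨ρ, hρ, hρeq⟩ := cs.exists_isReduced (b * s i)
  have hρlen : ρ.length < n := by rw [← hρ.eq, ← hρeq]; omega
  have hb' : π (ρ ++ [i]) = b := by rw [wordProd_append, wordProd_singleton, ← hρeq]; simp
  obtain ⟨μ, hμ, rfl⟩ := exists_sublist_of_bruhatLE hab hb'
  obtain ⟨μ', ν, rfl, hμ', hν⟩ := List.sublist_append_iff.mp hμ
  have hbelow : bruhatLE cs (π μ') (b * s i) :=
    hρeq ▸ hn.bruhatLE_wordProd_of_sublist hρ hρlen.le hμ'
  rcases List.sublist_singleton.mp hν with rfl | rfl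
  · left
    simpa using hbelow
  · right
    simpa [wordProd_append] using hbelow

theorem LiftsBelow.mul_simple_bruhatLE {n : ℕ} (hn : cs.LiftsBelow n) {a b : W} {i : B}
    (hb : ℓ b ≤ n) (hbi : ℓ (b * s i) < ℓ b) (hab : bruhatLE cs a b) :
    bruhatLE cs (a * s i) b := by
  rcases hn.bruhatLE_or_mul_simple_bruhatLE hb hbi hab with h | h
  · simpa using hn i (by omega) h (by simpa using hbi)
  · exact h.trans (mul_simple_bruhatLE_self hbi)

theorem LiftsBelow.succ {n : ℕ} (hn : cs.LiftsBelow n) : cs.LiftsBelow (n + 1) := by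
  intro x y i hy hxy hyi
  induction hxy using Relation.ReflTransGen.head_induction_on with
  | refl => exact .refl
  | @head x _ hstep hrest ih =>
    obtain ⟨t, ht, rfl, hl⟩ := hstep
    rcases cs.length_mul_simple (x * t) i with hasc | hdesc
    · exact (mul_simple_bruhatLE_mul_simple_of_isReflection ht hl (by omega)).trans ih
    · have := length_le_of_bruhatLE hrest
      have hxi := hn.mul_simple_bruhatLE (i := i) (by omega) (by omega)
        (bruhatLE_mul_of_isReflection ht hl)
      exact hxi.trans (hrest.trans (bruhatLE_mul_of_isReflection (cs.isReflection_simple i) hyi))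

variable (cs) in
theorem liftsBelow (n : ℕ) : cs.LiftsBelow n := by
  induction n with
  | zero => intro _ _ _ h; omega
  | succ n ih => exact ih.succ

theorem mul_simple_bruhatLE_mul_simple_of_length_lt {x y : W} {i : B} (h : bruhatLE cs x y)
    (hy : ℓ y < ℓ (y * s i)) : bruhatLE cs (x * s i) (y * s i) :=
  cs.liftsBelow (ℓ y + 1) i (by omega) h hy

theorem mul_simple_bruhatLE_of_length_mul_simple_lt {x y : W} {i : B} (h : bruhatLE cs x y)
    (hy : ℓ (y * s i) < ℓ y) : bruhatLE cs (x * s i) y :=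
  (cs.liftsBelow (ℓ y)).mul_simple_bruhatLE le_rfl hy h

theorem mul_simple_bruhatLE_mul_simple_of_length_mul_simple_lt {x y : W} {i : B}
    (h : bruhatLE cs x y) (hx : ℓ (x * s i) < ℓ x) (hy : ℓ (y * s i) < ℓ y) :
    bruhatLE cs (x * s i) (y * s i) := by
  rcases (cs.liftsBelow (ℓ y)).bruhatLE_or_mul_simple_bruhatLE le_rfl hy h with h' | h'
  · exact (mul_simple_bruhatLE_self hx).trans h'
  · exact h'

lemma isRightInversion_simple_mul_mul_simple {w t : W} {i : B} (hwi : ℓ (w * s i) < ℓ w)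
    (ht : cs.IsRightInversion (w * s i) t) : cs.IsRightInversion w (s i * t * s i) := by
  refine ⟨by simpa using ht.1.conj (s i), ?_⟩
  have hle := cs.length_mul_le (w * s i * t) (s i)
  rw [length_simple, show w * s i * t * s i = w * (s i * t * s i) by simp only [mul_assoc]] at hle
  have := ht.2
  omega

theorem exists_isRightInversion_of_bruhatLE {u w : W} (h : bruhatLE cs u w) (hne : u ≠ w) :
    ∃ t, cs.IsRightInversion w t ∧ ℓ u < ℓ (u * t) ∧ bruhatLE cs (u * t) w := by
  induction hw : ℓ w using Nat.strong_induction_on generalizing u w with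
  | _ n ih =>
  subst hw
  have hw1 : w ≠ 1 := by
    rintro rfl
    exact hne (cs.length_eq_zero_iff.mp (by simpa using length_le_of_bruhatLE h))
  obtain ⟨i, hwi : ℓ (w * s i) < ℓ w⟩ := cs.exists_rightDescent_of_ne_one hw1
  rcases cs.length_mul_simple u i with hui | hui
  · exact ⟨s i, (cs.isRightInversion_simple_iff_isRightDescent w i).mpr hwi, by omega,
      mul_simple_bruhatLE_of_length_mul_simple_lt h hwi⟩
  have hdown := mul_simple_bruhatLE_mul_simple_of_length_mul_simple_lt h (by omega) hwi
  obtain ⟨t, ht, hut, hle⟩ := ih _ hwi hdown (fun heq => hne (mul_right_cancel heq)) rfl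
  have hts : t ≠ s i := by
    rintro rfl
    have := ht.2
    rw [simple_mul_simple_cancel_right] at this
    omega
  refine ⟨s i * t * s i, isRightInversion_simple_mul_mul_simple hwi ht, ?_⟩
  set y := u * s i * t
  have hy : u * (s i * t * s i) = y * s i := by simp only [y, mul_assoc]
  rw [hy]
  rcases cs.length_mul_simple y i with hyi | hyi
  · refine ⟨by omega, ?_⟩
    simpa using mul_simple_bruhatLE_mul_simple_of_length_lt (i := i) hle (by simpa using hwi)
  refine ⟨?_, (mul_simple_bruhatLE_self (by omega)).trans
    (hle.trans (mul_simple_bruhatLE_self hwi))⟩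
  -- `ℓ y = ℓ u` would force `u ≤ y`, hence `u = y = u * s i * t` and `t = s i`.
  have hyu : ℓ y ≠ ℓ u := by
    intro hyu
    have huy : bruhatLE cs u y := by
      simpa using mul_simple_bruhatLE_of_length_mul_simple_lt
        (bruhatLE_mul_of_isReflection ht.1 hut) (by omega : ℓ (y * s i) < ℓ y)
    refine hts (mul_left_cancel (a := u * s i) ?_).symm
    rw [simple_mul_simple_cancel_right]
    exact eq_of_bruhatLE_of_length_le huy hyu.le
  have hne' := (ht.1.conj (s i)).length_mul_left_ne u
  rw [inv_simple, hy] at hne'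
  omega

theorem reflTransGen_isRightInversion_of_bruhatLE {u w : W} (h : bruhatLE cs u w) :
    Relation.ReflTransGen
      (fun x y => ∃ t, cs.IsRightInversion w t ∧ y = x * t ∧ ℓ x < ℓ y) u w := by
  induction hk : ℓ w - ℓ u using Nat.strong_induction_on generalizing u with
  | _ k ih =>
  by_cases hne : u = w
  · exact hne ▸ .refl
  obtain ⟨t, ht, hut, hle⟩ := exists_isRightInversion_of_bruhatLE h hne
  have := length_le_of_bruhatLE hle
  exact .head ⟨t, ht, rfl, hut⟩ (ih _ (by omega) hle rfl)

end CoxeterSystem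

theorem extPLE_iff_bruhatLE_of_minimalRep_general {M : CoxeterMatrix B}
    (cs : CoxeterSystem M W) (J : Set B) (w : W) (hw : isMinimalRep cs J w) (u : W) :
    extPLE cs J u w ↔ bruhatLE cs u w := by
  refine ⟨Relation.ReflTransGen.mono (fun _ _ ⟨t, ht, _, hy, hl⟩ => ⟨t, ht, hy, hl⟩) u w,
    fun h => ?_⟩
  refine Relation.ReflTransGen.mono
    (fun _ _ ⟨t, ht, hy, hl⟩ => ⟨t, ht.1, fun htJ => ?_, hy, hl⟩) u w
    (cs.reflTransGen_isRightInversion_of_bruhatLE h)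
  exact absurd (hw t htJ) (not_le.mpr ht.2)

theorem extPLE_iff_bruhatLE_of_minimalRep [Finite W] {M : CoxeterMatrix B}
    (cs : CoxeterSystem M W) (J : Set B) (w : W) (hw : isMinimalRep cs J w) (u : W) :
    extPLE cs J u w ↔ bruhatLE cs u w :=
  extPLE_iff_bruhatLE_of_minimalRep_general cs J w hw u
end

section
/- In the symmetric group S_n with W_P = S_k × S_{n−k} (the parabolic generated by all simple transpositions except s_k), the extended P-Bruhat order has the combinatorial description: u ≤_P w if and only if u(a) ≤ w(a) for all 1 ≤ a ≤ k and u(b) ≥ w(b) for all k < b ≤ n. -/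
/-!
STATEMENT 3: In `S_n` with `W_P = S_k × S_{n-k}`, the extended `P`-Bruhat order
(transitive closure of `u →_P u·τ_{ab}` for transpositions `τ_{ab}` with `a ≤ k < b`
and increasing length) is described by: `u ≤_P w` iff `u(a) ≤ w(a)` for all `a ≤ k` and
`u(b) ≥ w(b)` for all `b > k`.  (We use `0`-indexed positions `Fin n`, so positions
`a` with `a < k` and `b` with `k ≤ b`.)
-/

open Equiv

/-- The length (number of inversions) of a permutation of `Fin n`. -/
def invLength {n : ℕ} (u : Perm (Fin n)) : ℕ :=
  (Finset.univ.filter (fun p : Fin n × Fin n => p.1 < p.2 ∧ u p.2 < u p.1)).card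

/-- One step of the extended `k`-Bruhat order: `w = u * τ_{ab}` with `a < k ≤ b`
(0-indexed) and `ℓ(w) > ℓ(u)`. -/
def extKStep {n : ℕ} (k : ℕ) (u w : Perm (Fin n)) : Prop :=
  ∃ a b : Fin n, a.val < k ∧ k ≤ b.val ∧ w = u * Equiv.swap a b ∧
    invLength u < invLength w

/-- The extended `k`-Bruhat order `≤_k`. -/
def extKLE {n : ℕ} (k : ℕ) : Perm (Fin n) → Perm (Fin n) → Prop :=
  Relation.ReflTransGen (extKStep k)

/-- Key lemma: multiplying on the right by `swap a b` with `a < b` and `u a < u b`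
strictly increases the inversion number. -/
lemma invLength_lt_mul_swap {n : ℕ} (u : Perm (Fin n)) {a b : Fin n}
    (hab : a < b) (huab : u a < u b) :
    invLength u < invLength (u * Equiv.swap a b) := by
  classical
  set τ := Equiv.swap a b with hτdef
  have hτa : τ a = b := Equiv.swap_apply_left a b
  have hτb : τ b = a := Equiv.swap_apply_right a b
  have hττ : ∀ x, τ (τ x) = x := fun x => Equiv.swap_apply_self a b x
  have happ : ∀ x, (u * τ) x = u (τ x) := fun x => rfl
  set S := Finset.univ.filter (fun p : Fin n × Fin n => p.1 < p.2 ∧ u p.2 < u p.1)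
    with hS
  set S' := Finset.univ.filter
      (fun p : Fin n × Fin n => p.1 < p.2 ∧ (u * τ) p.2 < (u * τ) p.1) with hS'
  set h : Fin n × Fin n → Fin n × Fin n :=
    fun p => if τ p.1 < τ p.2 then (τ p.1, τ p.2) else p with hh
  have hmaps : ∀ p ∈ S, h p ∈ S' := by
    intro p hp
    simp only [hS, Finset.mem_filter, Finset.mem_univ, true_and] at hp
    obtain ⟨hp12, hpu⟩ := hp
    simp only [hS', Finset.mem_filter, Finset.mem_univ, true_and, hh]
    by_cases hc : τ p.1 < τ p.2
    · rw [if_pos hc]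
      exact ⟨hc, by rw [happ, happ, hττ, hττ]; exact hpu⟩
    · rw [if_neg hc]
      refine ⟨hp12, ?_⟩
      rw [happ, happ]
      by_cases h1 : p.1 = a
      · by_cases h2 : p.2 = b
        · rw [h1, h2] at hpu; exact absurd huab (not_lt.mpr hpu.le)
        · have h2a : p.2 ≠ a := by
            rw [h1] at hp12; exact (ne_of_gt hp12)
          have hfix : τ p.2 = p.2 := Equiv.swap_apply_of_ne_of_ne h2a h2
          rw [h1, hτa, hfix]
          rw [h1] at hpu
          exact lt_trans hpu huab
      · by_cases h2 : p.2 = b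
        · have h1b : p.1 ≠ b := by rw [h2] at hp12; exact ne_of_lt hp12
          have hfix : τ p.1 = p.1 := Equiv.swap_apply_of_ne_of_ne h1 h1b
          rw [h2, hτb, hfix]
          rw [h2] at hpu
          exact lt_trans huab hpu
        · exfalso
          apply hc
          by_cases h1b : p.1 = b
          · have h2a : p.2 ≠ a := fun he => by
              rw [h1b, he] at hp12; exact absurd (lt_trans hab hp12) (lt_irrefl a)
            have hfix : τ p.2 = p.2 := Equiv.swap_apply_of_ne_of_ne h2a h2
            rw [h1b, hτb, hfix]
            exact lt_trans hab (h1b ▸ hp12)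
          · by_cases h2a : p.2 = a
            · have hfix : τ p.1 = p.1 := Equiv.swap_apply_of_ne_of_ne h1 h1b
              rw [h2a, hτa, hfix]
              exact lt_trans (h2a ▸ hp12) hab
            · rw [Equiv.swap_apply_of_ne_of_ne h1 h1b,
                Equiv.swap_apply_of_ne_of_ne h2a h2]
              exact hp12
  have hinj : Set.InjOn h S := by
    intro p hp q hq hpq
    simp only [hS, Finset.coe_filter, Set.mem_setOf_eq, Finset.mem_univ, true_and]
      at hp hq
    by_cases hcp : τ p.1 < τ p.2 <;> by_cases hcq : τ q.1 < τ q.2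
    · simp only [hh, if_pos hcp, if_pos hcq, Prod.mk.injEq] at hpq
      exact Prod.ext (τ.injective hpq.1) (τ.injective hpq.2)
    · exfalso
      simp only [hh, if_pos hcp, if_neg hcq] at hpq
      apply hcq
      rw [← hpq]
      simpa [hττ] using hp.1
    · exfalso
      simp only [hh, if_neg hcp, if_pos hcq] at hpq
      apply hcp
      rw [hpq]
      simpa [hττ] using hq.1
    · simpa [hh, if_neg hcp, if_neg hcq] using hpq
  have habS' : (a, b) ∈ S' := by
    simp only [hS', Finset.mem_filter, Finset.mem_univ, true_and]
    refine ⟨hab, ?_⟩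
    rw [happ, happ, hτa, hτb]
    exact huab
  have habim : (a, b) ∉ S.image h := by
    intro hmem
    obtain ⟨p, hp, hpe⟩ := Finset.mem_image.mp hmem
    simp only [hS, Finset.mem_filter, Finset.mem_univ, true_and] at hp
    by_cases hc : τ p.1 < τ p.2
    · simp only [hh, if_pos hc, Prod.mk.injEq] at hpe
      have h1 : p.1 = b := by rw [← hττ p.1, hpe.1, hτa]
      have h2 : p.2 = a := by rw [← hττ p.2, hpe.2, hτb]
      rw [h1, h2] at hp
      exact absurd (lt_trans hab hp.1) (lt_irrefl a)
    · simp only [hh, if_neg hc] at hpe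
      rw [hpe] at hp
      exact absurd (lt_trans huab hp.2) (lt_irrefl (u a))
  have hsub : S.image h ⊆ S' := by
    intro q hq
    obtain ⟨p, hp, hpe⟩ := Finset.mem_image.mp hq
    exact hpe ▸ hmaps p hp
  have hcard : S.card = (S.image h).card := (Finset.card_image_of_injOn hinj).symm
  have hlt : (S.image h).card < S'.card :=
    Finset.card_lt_card ((Finset.ssubset_iff_of_subset hsub).mpr
      ⟨(a, b), habS', habim⟩)
  show S.card < S'.card
  rw [hcard]; exact hlt

lemma invLength_mul_swap_lt {n : ℕ} (u : Perm (Fin n)) {a b : Fin n}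
    (hab : a < b) (huab : u b < u a) :
    invLength (u * Equiv.swap a b) < invLength u := by
  have h := invLength_lt_mul_swap (u * Equiv.swap a b) hab (a := a) (b := b) (by
    show (u * Equiv.swap a b) a < (u * Equiv.swap a b) b
    rw [Perm.mul_apply, Perm.mul_apply, Equiv.swap_apply_left, Equiv.swap_apply_right]
    exact huab)
  rwa [mul_assoc, Equiv.swap_mul_self, mul_one] at h

/-- A single extended step implies the pointwise domination. -/
lemma dom_of_extKStep {n k : ℕ} {u w : Perm (Fin n)} (h : extKStep k u w) :
    (∀ a : Fin n, a.val < k → u a ≤ w a) ∧ (∀ b : Fin n, k ≤ b.val → w b ≤ u b) := by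
  obtain ⟨a, b, ha, hb, hw, hlen⟩ := h
  subst hw
  have hab : a < b := by
    rw [Fin.lt_def]; omega
  have huab : u a < u b := by
    rcases lt_trichotomy (u a) (u b) with h' | h' | h'
    · exact h'
    · exact absurd (u.injective h') (ne_of_lt hab)
    · exact absurd hlen (not_lt.mpr (invLength_mul_swap_lt u hab h').le)
  constructor
  · intro c hc
    by_cases hca : c = a
    · subst hca
      rw [Perm.mul_apply, Equiv.swap_apply_left]
      exact huab.le
    · have hcb : c ≠ b := fun he => by rw [he] at hc; omega
      rw [Perm.mul_apply, Equiv.swap_apply_of_ne_of_ne hca hcb]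
  · intro c hc
    by_cases hcb : c = b
    · subst hcb
      rw [Perm.mul_apply, Equiv.swap_apply_right]
      exact huab.le
    · have hca : c ≠ a := fun he => by rw [he] at hc; omega
      rw [Perm.mul_apply, Equiv.swap_apply_of_ne_of_ne hca hcb]

/-- Backward direction, by strong induction on the statistic
`∑_{a < k} (w a - u a)`. -/
lemma extKLE_of_dom {n k : ℕ} : ∀ N : ℕ, ∀ u w : Perm (Fin n),
    (∑ a ∈ Finset.univ.filter (fun a : Fin n => a.val < k),
      ((w a).val - (u a).val)) ≤ N →
    (∀ a : Fin n, a.val < k → u a ≤ w a) →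
    (∀ b : Fin n, k ≤ b.val → w b ≤ u b) →
    extKLE k u w := by
  intro N
  induction N using Nat.strong_induction_on with
  | _ N IH =>
  intro u w hN h1 h2
  by_cases huw : ∀ a : Fin n, a.val < k → u a = w a
  · -- then u = w on the second part too, by a sum argument
    have htot : ∑ x : Fin n, (u x).val = ∑ x : Fin n, (w x).val := by
      rw [Equiv.sum_comp u (fun i : Fin n => i.val),
        Equiv.sum_comp w (fun i : Fin n => i.val)]
    have hsplit : ∀ v : Perm (Fin n),
        (∑ x ∈ Finset.univ.filter (fun a : Fin n => a.val < k), (v x).val) +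
        (∑ x ∈ Finset.univ.filter (fun a : Fin n => ¬ a.val < k), (v x).val) =
        ∑ x : Fin n, (v x).val := fun v =>
      Finset.sum_filter_add_sum_filter_not _ _ _
    have hfirst :
        (∑ x ∈ Finset.univ.filter (fun a : Fin n => a.val < k), (u x).val) =
        ∑ x ∈ Finset.univ.filter (fun a : Fin n => a.val < k), (w x).val := by
      apply Finset.sum_congr rfl
      intro x hx
      simp only [Finset.mem_filter, Finset.mem_univ, true_and] at hx
      rw [huw x hx]
    have hsecond :
        (∑ x ∈ Finset.univ.filter (fun a : Fin n => ¬ a.val < k), (w x).val) =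
        ∑ x ∈ Finset.univ.filter (fun a : Fin n => ¬ a.val < k), (u x).val := by
      have e1 := hsplit u
      have e2 := hsplit w
      omega
    have hptle : ∀ x ∈ Finset.univ.filter (fun a : Fin n => ¬ a.val < k),
        (w x).val ≤ (u x).val := by
      intro x hx
      simp only [Finset.mem_filter, Finset.mem_univ, true_and] at hx
      exact h2 x (le_of_not_gt hx)
    have heq := (Finset.sum_eq_sum_iff_of_le hptle).mp hsecond
    have : u = w := by
      apply Equiv.ext
      intro x
      by_cases hx : x.val < k
      · exact huw x hx
      · have := heq x (by simp only [Finset.mem_filter, Finset.mem_univ, true_and]; exact hx)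
        exact Fin.val_injective this.symm
    rw [this]
    exact Relation.ReflTransGen.refl
  · push_neg at huw
    obtain ⟨a1, ha1k, ha1ne⟩ := huw
    have ha1 : u a1 < w a1 := lt_of_le_of_ne (h1 a1 ha1k) ha1ne
    -- the set of "increasable" first-part positions
    set A := Finset.univ.filter (fun a : Fin n => a.val < k ∧ u a < w a) with hA
    have hA1 : a1 ∈ A := by simp [hA, ha1k, ha1]
    obtain ⟨a0, ha0A, ha0max⟩ :=
      Finset.exists_max_image A (fun a => (u a).val) ⟨a1, hA1⟩
    simp only [hA, Finset.mem_filter, Finset.mem_univ, true_and] at ha0A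
    obtain ⟨ha0k, ha0lt⟩ := ha0A
    set b0 := u.symm (w a0) with hb0def
    have hub0 : u b0 = w a0 := u.apply_symm_apply _
    have hb0k : k ≤ b0.val := by
      by_contra hlt
      push_neg at hlt
      have hle := h1 b0 hlt
      have hne : u b0 ≠ w b0 := by
        intro he
        have : b0 = a0 := w.injective (by rw [← he, hub0])
        rw [this] at he
        rw [he] at ha0lt
        exact lt_irrefl _ ha0lt
      have hb0A : b0 ∈ A := by
        simp only [hA, Finset.mem_filter, Finset.mem_univ, true_and]
        exact ⟨hlt, lt_of_le_of_ne hle hne⟩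
      have := ha0max b0 hb0A
      rw [hub0] at this
      have := Fin.lt_def.mp ha0lt
      omega
    have hwb0 : w b0 < u b0 := by
      have hle := h2 b0 hb0k
      refine lt_of_le_of_ne hle ?_
      intro he
      have : b0 = a0 := w.injective (by rw [he, hub0])
      rw [this] at hb0k
      omega
    have hu0 : u a0 < u b0 := by rw [hub0]; exact ha0lt
    -- pick a pair minimizing the value gap
    set Pairs := Finset.univ.filter (fun p : Fin n × Fin n =>
      p.1.val < k ∧ k ≤ p.2.val ∧ u p.1 < w p.1 ∧ w p.2 < u p.2 ∧ u p.1 < u p.2)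
      with hPairs
    have hP0 : (a0, b0) ∈ Pairs := by
      simp only [hPairs, Finset.mem_filter, Finset.mem_univ, true_and]
      exact ⟨ha0k, hb0k, ha0lt, hwb0, hu0⟩
    obtain ⟨p, hpP, hpmin⟩ :=
      Finset.exists_min_image Pairs
        (fun p => (u p.2).val - (u p.1).val) ⟨(a0, b0), hP0⟩
    obtain ⟨a, b⟩ := p
    simp only [hPairs, Finset.mem_filter, Finset.mem_univ, true_and] at hpP
    obtain ⟨hak, hbk, hAa, hBb, huab⟩ := hpP
    -- gap lemma: nothing from A ∪ B has u-value strictly between u a and u b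
    have hgap : ∀ q : Fin n, u a < u q → u q < u b → u q = w q := by
      intro q h1q h2q
      have hv1 : (u a).val < (u q).val := Fin.lt_def.mp h1q
      have hv2 : (u q).val < (u b).val := Fin.lt_def.mp h2q
      by_cases hqk : q.val < k
      · by_contra hne
        have hlt := lt_of_le_of_ne (h1 q hqk) hne
        have hmem : (q, b) ∈ Pairs := by
          simp only [hPairs, Finset.mem_filter, Finset.mem_univ, true_and]
          exact ⟨hqk, hbk, hlt, hBb, h2q⟩
        have := hpmin (q, b) hmem
        simp only at this
        omega
      · by_contra hne
        have hlt := lt_of_le_of_ne (h2 q (le_of_not_gt hqk)) (Ne.symm hne)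
        have hmem : (a, q) ∈ Pairs := by
          simp only [hPairs, Finset.mem_filter, Finset.mem_univ, true_and]
          exact ⟨hak, le_of_not_gt hqk, hAa, hlt, h1q⟩
        have := hpmin (a, q) hmem
        simp only at this
        omega
    have hba : u b ≤ w a := by
      by_contra hlt
      push_neg at hlt
      set q := u.symm (w a) with hqdef
      have huq : u q = w a := u.apply_symm_apply _
      have h1q : u a < u q := by rw [huq]; exact hAa
      have h2q : u q < u b := by rw [huq]; exact hlt
      have := hgap q h1q h2q
      rw [huq] at this
      have : q = a := w.injective this.symm
      rw [this] at huq
      exact absurd huq (ne_of_lt hAa)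
    have hwb : w b ≤ u a := by
      by_contra hlt
      push_neg at hlt
      set q := u.symm (w b) with hqdef
      have huq : u q = w b := u.apply_symm_apply _
      have h1q : u a < u q := by rw [huq]; exact hlt
      have h2q : u q < u b := by rw [huq]; exact hBb
      have := hgap q h1q h2q
      rw [huq] at this
      have : q = b := w.injective this.symm
      rw [this] at huq
      exact absurd huq.symm (ne_of_lt hBb)
    -- perform the step
    have hab : a < b := by rw [Fin.lt_def]; omega
    set u' := u * Equiv.swap a b with hu'def
    have hu'a : u' a = u b := by
      rw [hu'def, Perm.mul_apply, Equiv.swap_apply_left]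
    have hu'b : u' b = u a := by
      rw [hu'def, Perm.mul_apply, Equiv.swap_apply_right]
    have hu'c : ∀ c : Fin n, c ≠ a → c ≠ b → u' c = u c := by
      intro c hca hcb
      rw [hu'def, Perm.mul_apply, Equiv.swap_apply_of_ne_of_ne hca hcb]
    have hstep : extKStep k u u' :=
      ⟨a, b, hak, hbk, rfl, invLength_lt_mul_swap u hab huab⟩
    have h1' : ∀ c : Fin n, c.val < k → u' c ≤ w c := by
      intro c hc
      by_cases hca : c = a
      · subst hca; rw [hu'a]; exact hba
      · have hcb : c ≠ b := fun he => by rw [he] at hc; omega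
        rw [hu'c c hca hcb]; exact h1 c hc
    have h2' : ∀ c : Fin n, k ≤ c.val → w c ≤ u' c := by
      intro c hc
      by_cases hcb : c = b
      · subst hcb; rw [hu'b]; exact hwb
      · have hca : c ≠ a := fun he => by rw [he] at hc; omega
        rw [hu'c c hca hcb]; exact h2 c hc
    -- statistic strictly decreases
    have hsumlt :
        (∑ c ∈ Finset.univ.filter (fun a : Fin n => a.val < k),
          ((w c).val - (u' c).val)) <
        ∑ c ∈ Finset.univ.filter (fun a : Fin n => a.val < k),
          ((w c).val - (u c).val) := by
      apply Finset.sum_lt_sum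
      · intro c hc
        simp only [Finset.mem_filter, Finset.mem_univ, true_and] at hc
        by_cases hca : c = a
        · subst hca
          rw [hu'a]
          have h1v := Fin.lt_def.mp huab
          omega
        · have hcb : c ≠ b := fun he => by rw [he] at hc; omega
          rw [hu'c c hca hcb]
      · refine ⟨a, by simp [hak], ?_⟩
        rw [hu'a]
        have h1v := Fin.lt_def.mp huab
        have h2v := Fin.le_def.mp hba
        have h3v := Fin.lt_def.mp hAa
        omega
    have hlt : (∑ c ∈ Finset.univ.filter (fun a : Fin n => a.val < k),
        ((w c).val - (u' c).val)) < N := lt_of_lt_of_le hsumlt hN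
    exact Relation.ReflTransGen.head hstep
      (IH _ hlt u' w le_rfl h1' h2')

theorem extKLE_iff {n k : ℕ} (hk : k ≤ n) (u w : Perm (Fin n)) :
    extKLE k u w ↔
      (∀ a : Fin n, a.val < k → u a ≤ w a) ∧ (∀ b : Fin n, k ≤ b.val → w b ≤ u b) := by
  constructor
  · intro h
    induction h with
    | refl => exact ⟨fun _ _ => le_rfl, fun _ _ => le_rfl⟩
    | tail hsteps hstep ih =>
      obtain ⟨ih1, ih2⟩ := ih
      obtain ⟨s1, s2⟩ := dom_of_extKStep hstep
      exact ⟨fun a ha => le_trans (ih1 a ha) (s1 a ha),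
        fun b hb => le_trans (s2 b hb) (ih2 b hb)⟩
  · intro ⟨h1, h2⟩
    exact extKLE_of_dom _ u w le_rfl h1 h2
end

section
/- Let W be the hyperoctahedral group of signed permutations of {±1,...,±n} (bijections w with w(−i) = −w(i)) and W_P ≅ S_n the parabolic subgroup of elements with w(i) > 0 for all i > 0. Then u ≤_P w if and only if u(i) ≥ w(i) for all 1 ≤ i ≤ n. -/
/-!
STATEMENT 4: Let `W` be the hyperoctahedral group of signed permutations of `{±1,…,±n}`
(bijections `w` of `ℤ` with `w(-i) = -w(i)`, supported on `{±1,…,±n}`) and `W_P ≅ S_n`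
the parabolic subgroup of elements with `w(i) > 0` for all `i > 0`.  Then
`u ≤_P w ↔ u(i) ≥ w(i)` for all `1 ≤ i ≤ n`.  Here `≤_P` is the extended `P`-Bruhat
order: the transitive closure of `u →_P u·s_α` for positive roots `α` outside the positive
system of `W_P`, i.e. `α = e_i + e_j` (`i < j`) or the (co)root at `i`, with length
increasing; the reflection `s_{e_i+e_j}` swaps `i ↔ -j, j ↔ -i`, and `s_i` swaps `i ↔ -i`.
-/

open Equiv

/-- `w` is a signed permutation of `{±1, …, ±n}`: an element of the hyperoctahedral group. -/
def IsSigned (n : ℕ) (w : Perm ℤ) : Prop :=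
  (∀ i : ℤ, w (-i) = - w i) ∧ (∀ i : ℤ, (n : ℤ) < |i| → w i = i)

/-- The type B/C length of a signed permutation:
`ℓ(w) = #{1 ≤ i < j ≤ n : w(i) > w(j)} + #{1 ≤ i ≤ j ≤ n : w(i) + w(j) < 0}`. -/
noncomputable def lenB (n : ℕ) (w : Perm ℤ) : ℕ :=
  ((Finset.Icc (1 : ℤ) n ×ˢ Finset.Icc (1 : ℤ) n).filter
      (fun p => p.1 < p.2 ∧ w p.2 < w p.1)).card +
  ((Finset.Icc (1 : ℤ) n ×ˢ Finset.Icc (1 : ℤ) n).filter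
      (fun p => p.1 ≤ p.2 ∧ w p.1 + w p.2 < 0)).card

/-- One step of the extended `P`-Bruhat order: `w = u·s_α` with `α` a positive root
outside the positive system of `W_P` (namely `α = e_i + e_j` with `1 ≤ i < j ≤ n`, or the
root at `i` with `1 ≤ i ≤ n`), such that `ℓ(w) > ℓ(u)`. -/
def extPStepB (n : ℕ) (u w : Perm ℤ) : Prop :=
  (∃ i j : ℤ, 1 ≤ i ∧ i < j ∧ j ≤ (n : ℤ) ∧
    w = u * (Equiv.swap i (-j) * Equiv.swap j (-i)) ∧ lenB n u < lenB n w) ∨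
  (∃ i : ℤ, 1 ≤ i ∧ i ≤ (n : ℤ) ∧ w = u * Equiv.swap i (-i) ∧ lenB n u < lenB n w)

/-- The extended `P`-Bruhat order on the hyperoctahedral group. -/
def extPLEB (n : ℕ) : Perm ℤ → Perm ℤ → Prop :=
  Relation.ReflTransGen (extPStepB n)

/-
A step `u → u·t` with `t = s_{e_i+e_j}` (resp. `s_i`) replaces `u(i), u(j)` by `-u(j), -u(i)`
(resp. `u(i)` by `-u(i)`), and it raises the length exactly when `u(i) + u(j) > 0` (resp.
`u(i) > 0`): an involution of the index set of inversions carries the inversions of `u` into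
those of `u·t`, missing the one at `(i, j)` (resp. `(i, i)`), and the converse follows by
applying this to `u·t`. So a step lowers the values at positive positions.

Conversely, if `w ≤ u` pointwise and `u ≠ w`, let `i` be a position where they differ with
`u(i)` minimal, so `u` and `w` agree wherever `u` is below `u(i)`. If `u(i) > 0` this forces
`w(i) ≤ -u(i)` and `s_i` is a step that stays above `w`; if `u(i) < 0`, the disagreeing
position `j` with `u(j)` minimal subject to `u(j) > -u(i)` gives such a step `t_{ij}`.
The length grows along steps and is bounded, so iterating reaches `w`.
-/

open Finset Function

noncomputable def invSet (n : ℕ) (f : ℤ → ℤ) : Finset ((ℤ × ℤ) ⊕ (ℤ × ℤ)) :=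
  ((Icc (1 : ℤ) n ×ˢ Icc (1 : ℤ) n).filter (fun p => p.1 < p.2 ∧ f p.2 < f p.1)).disjSum
    ((Icc (1 : ℤ) n ×ˢ Icc (1 : ℤ) n).filter (fun p => p.1 ≤ p.2 ∧ f p.1 + f p.2 < 0))

section invSet

variable {n : ℕ} {f g : ℤ → ℤ}

lemma lenB_eq_card_invSet (w : Perm ℤ) : lenB n w = #(invSet n w) :=
  (card_disjSum _ _).symm

@[simp]
lemma inl_mem_invSet {x y : ℤ} :
    Sum.inl (x, y) ∈ invSet n f ↔ 1 ≤ x ∧ x ≤ n ∧ 1 ≤ y ∧ y ≤ n ∧ x < y ∧ f y < f x := by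
  simp [invSet, and_assoc]

@[simp]
lemma inr_mem_invSet {x y : ℤ} :
    Sum.inr (x, y) ∈ invSet n f ↔ 1 ≤ x ∧ x ≤ n ∧ 1 ≤ y ∧ y ≤ n ∧ x ≤ y ∧ f x + f y < 0 := by
  simp [invSet, and_assoc]

lemma invSet_congr (h : ∀ k : ℤ, 1 ≤ k → k ≤ n → f k = g k) : invSet n f = invSet n g := by
  unfold invSet
  congr 1 <;> refine filter_congr fun p hp => ?_ <;> simp only [mem_product, mem_Icc] at hp <;>
    rw [h p.1 hp.1.1 hp.1.2, h p.2 hp.2.1 hp.2.2]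

lemma card_invSet_lt_of_involutive {σ : (ℤ × ℤ) ⊕ (ℤ × ℤ) → (ℤ × ℤ) ⊕ (ℤ × ℤ)}
    (hσ : Involutive σ) (hmaps : ∀ p ∈ invSet n f, σ p ∈ invSet n g)
    {z : (ℤ × ℤ) ⊕ (ℤ × ℤ)} (hz : z ∈ invSet n g) (hσz : σ z ∉ invSet n f) :
    #(invSet n f) < #(invSet n g) := by
  refine lt_of_le_of_lt ?_ (card_erase_lt_of_mem hz)
  refine card_le_card_of_injOn σ (fun p hp => mem_erase.2 ⟨?_, hmaps p hp⟩) hσ.injective.injOn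
  rintro rfl
  exact hσz (by rwa [hσ])

end invSet

/-- When `f i + f j > 0` (resp. `f i > 0`), these involutions carry the inversions of `f` into
those of `f` with the values at `i, j` replaced by `-f j, -f i` (resp. at `i` by `-f i`). -/
def invSetInvolPair (i j : ℤ) : (ℤ × ℤ) ⊕ (ℤ × ℤ) → (ℤ × ℤ) ⊕ (ℤ × ℤ)
  | .inl (x, y) =>
      if x = i ∧ j < y then .inr (j, y)
      else if x = j ∧ j < y then .inr (i, y)
      else if x = i ∧ i < y ∧ y < j then .inr (y, j)
      else .inl (x, y)
  | .inr (x, y) =>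
      if x = i ∧ j < y then .inl (j, y)
      else if x = j ∧ j < y then .inl (i, y)
      else if y = j ∧ i < x ∧ x < j then .inl (i, x)
      else .inr (x, y)

def invSetInvolSelf (i : ℤ) : (ℤ × ℤ) ⊕ (ℤ × ℤ) → (ℤ × ℤ) ⊕ (ℤ × ℤ)
  | .inl (x, y) => if x = i ∧ i < y then .inr (x, y) else .inl (x, y)
  | .inr (x, y) => if x = i ∧ i < y then .inl (x, y) else .inr (x, y)

lemma invSetInvolPair_involutive {i j : ℤ} (hij : i < j) : Involutive (invSetInvolPair i j) := by
  rintro (⟨x, y⟩ | ⟨x, y⟩) <;>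
    · simp only [invSetInvolPair]
      split_ifs <;> simp only <;> split_ifs <;> simp_all [Prod.ext_iff] <;> omega

lemma invSetInvolSelf_involutive (i : ℤ) : Involutive (invSetInvolSelf i) := by
  rintro (⟨x, y⟩ | ⟨x, y⟩) <;> simp only [invSetInvolSelf] <;> split_ifs <;> simp_all

lemma card_invSet_lt_update_pair {n : ℕ} {f : ℤ → ℤ} {i j : ℤ} (hi : 1 ≤ i) (hij : i < j)
    (hjn : j ≤ n) (hsum : 0 < f i + f j) :
    #(invSet n f) < #(invSet n (update (update f i (-f j)) j (-f i))) := by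
  refine card_invSet_lt_of_involutive (invSetInvolPair_involutive hij) ?_ (z := .inr (i, j)) ?_ ?_
  · rintro (⟨x, y⟩ | ⟨x, y⟩) hp <;> simp only [inl_mem_invSet, inr_mem_invSet] at hp <;>
      simp only [invSetInvolPair] <;> split_ifs <;>
      simp only [inl_mem_invSet, inr_mem_invSet, update_apply] <;> split_ifs <;>
      casesm* _ ∧ _ <;> subst_vars <;> omega
  · simp [update_apply]; omega
  · simp [invSetInvolPair]; omega

lemma card_invSet_lt_update_self {n : ℕ} {f : ℤ → ℤ} {i : ℤ} (hi : 1 ≤ i) (hin : i ≤ n)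
    (hpos : 0 < f i) : #(invSet n f) < #(invSet n (update f i (-f i))) := by
  refine card_invSet_lt_of_involutive (invSetInvolSelf_involutive i) ?_ (z := .inr (i, i)) ?_ ?_
  · rintro (⟨x, y⟩ | ⟨x, y⟩) hp <;> simp only [inl_mem_invSet, inr_mem_invSet] at hp <;>
      simp only [invSetInvolSelf] <;> split_ifs <;>
      simp only [inl_mem_invSet, inr_mem_invSet, update_apply] <;> split_ifs <;>
      casesm* _ ∧ _ <;> subst_vars <;> omega
  · simp; omega
  · simp [invSetInvolSelf]; omega

section IsSigned

variable {n : ℕ} {u v w : Perm ℤ}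

lemma IsSigned.apply_zero (hu : IsSigned n u) : u 0 = 0 := by
  have := hu.1 0
  rw [neg_zero] at this
  omega

lemma IsSigned.apply_ne_zero (hu : IsSigned n u) {k : ℤ} (hk : k ≠ 0) : u k ≠ 0 :=
  fun h => hk (u.injective (h.trans hu.apply_zero.symm))

lemma IsSigned.abs_apply_le (hu : IsSigned n u) {k : ℤ} (hk : |k| ≤ n) : |u k| ≤ n := by
  by_contra h
  rw [u.injective (hu.2 (u k) (not_le.1 h))] at h
  exact h hk

lemma IsSigned.apply_ne_neg_apply (hu : IsSigned n u) {i k : ℤ} (hi : 0 < i) (hk : 0 < k) :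
    u k ≠ -u i := by
  rw [← hu.1]
  intro h
  have := u.injective h
  omega

lemma IsSigned.symm (hu : IsSigned n u) : IsSigned n u.symm :=
  ⟨fun i => by rw [Equiv.symm_apply_eq, hu.1, Equiv.apply_symm_apply],
    fun i hi => by rw [Equiv.symm_apply_eq, hu.2 i hi]⟩

lemma IsSigned.mul (hu : IsSigned n u) (hv : IsSigned n v) : IsSigned n (u * v) :=
  ⟨fun i => by simp only [Perm.mul_apply, hv.1, hu.1],
    fun i hi => by simp only [Perm.mul_apply, hv.2 i hi, hu.2 i hi]⟩

lemma IsSigned.ext (hu : IsSigned n u) (hw : IsSigned n w)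
    (h : ∀ k : ℤ, 1 ≤ k → k ≤ n → u k = w k) : u = w := by
  ext k
  rcases lt_trichotomy k 0 with hk | rfl | hk
  · by_cases hkn : -(n : ℤ) ≤ k
    · rw [← neg_neg k, hu.1, hw.1, h (-k) (by omega) (by omega)]
    · rw [hu.2 k (by rw [lt_abs]; omega), hw.2 k (by rw [lt_abs]; omega)]
  · rw [hu.apply_zero, hw.apply_zero]
  · by_cases hkn : k ≤ n
    · exact h k hk hkn
    · rw [hu.2 k (by rw [lt_abs]; omega), hw.2 k (by rw [lt_abs]; omega)]

lemma IsSigned.exists_apply_eq_or_eq_neg (hu : IsSigned n u) (hw : IsSigned n w) {m : ℤ}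
    (hm : 1 ≤ m) (hmn : m ≤ n) : ∃ k : ℤ, 1 ≤ k ∧ k ≤ n ∧ (u k = w m ∨ u k = -w m) := by
  have hwm : |w m| ≤ n := hw.abs_apply_le (by rw [abs_le]; omega)
  have hk0 : u.symm (w m) ≠ 0 := hu.symm.apply_ne_zero (hw.apply_ne_zero (by omega))
  have hkn := abs_le.1 (hu.symm.abs_apply_le hwm)
  rcases hk0.lt_or_gt with hk | hk
  · refine ⟨-u.symm (w m), by omega, by omega, Or.inr ?_⟩
    rw [hu.1, Equiv.apply_symm_apply]
  · exact ⟨u.symm (w m), by omega, by omega, Or.inl (Equiv.apply_symm_apply _ _)⟩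

end IsSigned

def reflPair (i j : ℤ) : Perm ℤ := swap i (-j) * swap j (-i)

section Reflections

variable {n : ℕ} {u v : Perm ℤ} {i j : ℤ}

lemma reflPair_apply (hi : 1 ≤ i) (hij : i < j) (k : ℤ) :
    reflPair i j k = if k = j then -i else if k = -i then j else if k = i then -j
      else if k = -j then i else k := by
  simp only [reflPair, Perm.mul_apply, swap_apply_def]
  split_ifs <;> omega

lemma reflPair_mul_self (hi : 1 ≤ i) (hij : i < j) : reflPair i j * reflPair i j = 1 := by
  ext k
  simp only [Perm.mul_apply, reflPair_apply hi hij, Perm.one_apply]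
  split_ifs <;> omega

lemma isSigned_reflPair (hi : 1 ≤ i) (hij : i < j) (hjn : j ≤ n) : IsSigned n (reflPair i j) :=
  ⟨fun k => by simp only [reflPair_apply hi hij]; split_ifs <;> omega,
    fun k hk => by rw [lt_abs] at hk; simp only [reflPair_apply hi hij]; split_ifs <;> omega⟩

lemma isSigned_swap_neg (hi : 1 ≤ i) (hin : i ≤ n) : IsSigned n (swap i (-i)) :=
  ⟨fun k => by simp only [swap_apply_def]; split_ifs <;> omega,
    fun k hk => by rw [lt_abs] at hk; simp only [swap_apply_def]; split_ifs <;> omega⟩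

lemma IsSigned.mul_reflPair_apply (hu : IsSigned n u) (hi : 1 ≤ i) (hij : i < j) {k : ℤ}
    (hk : 1 ≤ k) : (u * reflPair i j) k = update (update u i (-u j)) j (-u i) k := by
  simp only [Perm.mul_apply, reflPair_apply hi hij, update_apply]
  split_ifs <;> first | omega | (subst_vars; rw [hu.1])

lemma IsSigned.mul_swap_neg_apply (hu : IsSigned n u) (hi : 1 ≤ i) {k : ℤ} (hk : 1 ≤ k) :
    (u * swap i (-i)) k = update u i (-u i) k := by
  simp only [Perm.mul_apply, swap_apply_def, update_apply]
  split_ifs <;> first | omega | (subst_vars; rw [hu.1])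

lemma IsSigned.lenB_lt_mul_reflPair (hu : IsSigned n u) (hi : 1 ≤ i) (hij : i < j)
    (hjn : j ≤ n) (hsum : 0 < u i + u j) : lenB n u < lenB n (u * reflPair i j) := by
  rw [lenB_eq_card_invSet, lenB_eq_card_invSet,
    invSet_congr fun k hk _ => hu.mul_reflPair_apply hi hij hk]
  exact card_invSet_lt_update_pair hi hij hjn hsum

lemma IsSigned.lenB_lt_mul_swap_neg (hu : IsSigned n u) (hi : 1 ≤ i) (hin : i ≤ n)
    (hpos : 0 < u i) : lenB n u < lenB n (u * swap i (-i)) := by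
  rw [lenB_eq_card_invSet, lenB_eq_card_invSet,
    invSet_congr fun k hk _ => hu.mul_swap_neg_apply hi hk]
  exact card_invSet_lt_update_self hi hin hpos

lemma IsSigned.lenB_lt_mul_reflPair_iff (hu : IsSigned n u) (hi : 1 ≤ i) (hij : i < j)
    (hjn : j ≤ n) : lenB n u < lenB n (u * reflPair i j) ↔ 0 < u i + u j := by
  refine ⟨fun hlt => ?_, hu.lenB_lt_mul_reflPair hi hij hjn⟩
  by_contra hle
  have hne : u j ≠ -u i := hu.apply_ne_neg_apply (by omega) (by omega)
  have hv := hu.mul (isSigned_reflPair hi hij hjn)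
  have hback := hv.lenB_lt_mul_reflPair hi hij hjn (by
    rw [hu.mul_reflPair_apply hi hij hi, hu.mul_reflPair_apply hi hij (by omega)]
    simp only [update_apply]
    split_ifs <;> omega)
  rw [mul_assoc, reflPair_mul_self hi hij, mul_one] at hback
  omega

lemma IsSigned.lenB_lt_mul_swap_neg_iff (hu : IsSigned n u) (hi : 1 ≤ i) (hin : i ≤ n) :
    lenB n u < lenB n (u * swap i (-i)) ↔ 0 < u i := by
  refine ⟨fun hlt => ?_, hu.lenB_lt_mul_swap_neg hi hin⟩
  by_contra hle
  have hne : u i ≠ 0 := hu.apply_ne_zero (by omega)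
  have hv := hu.mul (isSigned_swap_neg hi hin)
  have hback := hv.lenB_lt_mul_swap_neg hi hin (by
    rw [hu.mul_swap_neg_apply hi hi, update_self]
    omega)
  rw [mul_assoc, swap_mul_self, mul_one] at hback
  omega

end Reflections

section Steps

variable {n : ℕ} {u v w : Perm ℤ}

lemma extPStepB.lenB_lt (h : extPStepB n u v) : lenB n u < lenB n v := by
  rcases h with ⟨_, _, _, _, _, _, h⟩ | ⟨_, _, _, _, h⟩ <;> exact h

lemma lenB_le (v : Perm ℤ) : lenB n v ≤ 2 * n ^ 2 := by
  have hcard : #(Icc (1 : ℤ) n ×ˢ Icc (1 : ℤ) n) = n ^ 2 := by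
    rw [card_product, Int.card_Icc, add_sub_cancel_right, Int.toNat_natCast, sq]
  unfold lenB
  have h₁ := card_filter_le (Icc (1 : ℤ) n ×ˢ Icc (1 : ℤ) n)
    (fun p => p.1 < p.2 ∧ v p.2 < v p.1)
  have h₂ := card_filter_le (Icc (1 : ℤ) n ×ˢ Icc (1 : ℤ) n)
    (fun p => p.1 ≤ p.2 ∧ v p.1 + v p.2 < 0)
  omega

lemma IsSigned.extPStepB_le (hu : IsSigned n u) (h : extPStepB n u v) :
    IsSigned n v ∧ ∀ k : ℤ, 1 ≤ k → k ≤ n → v k ≤ u k := by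
  rcases h with ⟨i, j, hi, hij, hjn, rfl, hlt⟩ | ⟨i, hi, hin, rfl, hlt⟩
  · have hsum := (hu.lenB_lt_mul_reflPair_iff hi hij hjn).1 hlt
    refine ⟨hu.mul (isSigned_reflPair hi hij hjn), fun k hk _ =>
      (hu.mul_reflPair_apply hi hij hk).trans_le ?_⟩
    simp only [update_apply]
    split_ifs <;> subst_vars <;> omega
  · have hpos := (hu.lenB_lt_mul_swap_neg_iff hi hin).1 hlt
    refine ⟨hu.mul (isSigned_swap_neg hi hin), fun k hk _ =>
      (hu.mul_swap_neg_apply hi hk).trans_le ?_⟩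
    simp only [update_apply]
    split_ifs <;> subst_vars <;> omega

lemma IsSigned.le_of_extPLEB (hu : IsSigned n u) (h : extPLEB n u w) :
    ∀ k : ℤ, 1 ≤ k → k ≤ n → w k ≤ u k := by
  induction h using Relation.ReflTransGen.head_induction_on with
  | refl => exact fun _ _ _ => le_rfl
  | head hstep _ ih =>
    obtain ⟨hv, hle⟩ := hu.extPStepB_le hstep
    exact fun k hk hkn => (ih hv k hk hkn).trans (hle k hk hkn)

lemma IsSigned.exists_extPStepB_pair (hu : IsSigned n u) {i j : ℤ} (hi : 1 ≤ i) (hin : i ≤ n)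
    (hj : 1 ≤ j) (hjn : j ≤ n) (hij : i ≠ j) (hsum : 0 < u i + u j) :
    ∃ v, extPStepB n u v ∧ IsSigned n v ∧
      ∀ k : ℤ, 1 ≤ k → v k = update (update u i (-u j)) j (-u i) k := by
  rcases hij.lt_or_gt with h | h
  · exact ⟨_, .inl ⟨i, j, hi, h, hjn, rfl, hu.lenB_lt_mul_reflPair hi h hjn hsum⟩,
      hu.mul (isSigned_reflPair hi h hjn), fun k hk => hu.mul_reflPair_apply hi h hk⟩
  · refine ⟨_, .inl ⟨j, i, hj, h, hin, rfl, hu.lenB_lt_mul_reflPair hj h hin (by omega)⟩,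
      hu.mul (isSigned_reflPair hj h hin), fun k hk => ?_⟩
    exact (hu.mul_reflPair_apply hj h hk).trans (by rw [update_comm h.ne'])

lemma IsSigned.exists_extPStepB_self (hu : IsSigned n u) {i : ℤ} (hi : 1 ≤ i) (hin : i ≤ n)
    (hpos : 0 < u i) :
    ∃ v, extPStepB n u v ∧ IsSigned n v ∧ ∀ k : ℤ, 1 ≤ k → v k = update u i (-u i) k :=
  ⟨_, .inr ⟨i, hi, hin, rfl, hu.lenB_lt_mul_swap_neg hi hin hpos⟩,
    hu.mul (isSigned_swap_neg hi hin), fun _ hk => hu.mul_swap_neg_apply hi hk⟩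

end Steps

section Descent

variable {n : ℕ} {u w : Perm ℤ} {i : ℤ}

lemma IsSigned.le_neg_of_agree_below (hu : IsSigned n u) (hw : IsSigned n w) (hi : 1 ≤ i)
    (hin : i ≤ n) (hagree : ∀ k : ℤ, 1 ≤ k → k ≤ n → u k < u i → w k = u k)
    (hwi : w i < u i) (hpos : 0 < u i) : w i ≤ -u i := by
  by_contra hlt
  obtain ⟨k, hk, hkn, hk'⟩ := hu.exists_apply_eq_or_eq_neg hw hi hin
  have hwk := hagree k hk hkn (by omega)
  rcases hk' with hk' | hk'
  · have := w.injective (hwk.trans hk')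
    subst this
    omega
  · exact hw.apply_ne_neg_apply (by omega) (by omega) (hwk.trans hk')

lemma IsSigned.exists_partner_of_agree_below (hu : IsSigned n u) (hw : IsSigned n w)
    (hle : ∀ k : ℤ, 1 ≤ k → k ≤ n → w k ≤ u k) (hi : 1 ≤ i) (hin : i ≤ n)
    (hagree : ∀ k : ℤ, 1 ≤ k → k ≤ n → u k < u i → w k = u k)
    (hwi : w i < u i) (hneg : u i < 0) :
    ∃ j : ℤ, 1 ≤ j ∧ j ≤ n ∧ 0 < u i + u j ∧ w i ≤ -u j ∧ w j ≤ -u i := by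
  classical
  set K := (Icc (1 : ℤ) n).filter (fun k => u k ≠ w k ∧ -u i < u k)
  obtain ⟨j₀, hj₀, hj₀n, hj₀'⟩ := hu.exists_apply_eq_or_eq_neg hw hi hin
  have hj₀K : j₀ ∈ K ∧ u j₀ = -w i := by
    rcases hj₀' with hj₀' | hj₀'
    · have := w.injective ((hagree j₀ hj₀ hj₀n (by omega)).trans hj₀')
      subst this
      omega
    · refine ⟨mem_filter.2 ⟨mem_Icc.2 ⟨hj₀, hj₀n⟩, fun h => ?_, by omega⟩, hj₀'⟩
      exact hw.apply_ne_neg_apply (by omega) hj₀ (h.symm.trans hj₀')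
  obtain ⟨j, hjK, hjmin⟩ := K.exists_min_image u ⟨j₀, hj₀K.1⟩
  obtain ⟨hj, hjn⟩ := mem_Icc.1 (mem_filter.1 hjK).1
  obtain ⟨hjw, hji⟩ := (mem_filter.1 hjK).2
  have hj₀min := hjmin j₀ hj₀K.1
  refine ⟨j, hj, hjn, by omega, by omega, ?_⟩
  by_contra hlt
  have hwj : w j < u j := lt_of_le_of_ne (hle j hj hjn) (Ne.symm hjw)
  obtain ⟨k, hk, hkn, hk'⟩ := hu.exists_apply_eq_or_eq_neg hw hj hjn
  rcases hk' with hk' | hk'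
  · by_cases hkw : u k = w k
    · have := w.injective (hkw.symm.trans hk')
      subst this
      exact hjw hkw
    · have := hjmin k (mem_filter.2 ⟨mem_Icc.2 ⟨hk, hkn⟩, hkw, by omega⟩)
      omega
  · exact hw.apply_ne_neg_apply (by omega) (by omega) ((hagree k hk hkn (by omega)).trans hk')

lemma IsSigned.exists_extPStepB_of_le (hu : IsSigned n u) (hw : IsSigned n w)
    (hle : ∀ k : ℤ, 1 ≤ k → k ≤ n → w k ≤ u k) (hne : u ≠ w) :
    ∃ v, extPStepB n u v ∧ IsSigned n v ∧ ∀ k : ℤ, 1 ≤ k → k ≤ n → w k ≤ v k := by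
  classical
  set D := (Icc (1 : ℤ) n).filter (fun k => u k ≠ w k)
  have hDne : D.Nonempty := by
    by_contra h
    refine hne (hu.ext hw fun k hk hkn => ?_)
    by_contra hk'
    exact h ⟨k, mem_filter.2 ⟨mem_Icc.2 ⟨hk, hkn⟩, hk'⟩⟩
  obtain ⟨i, hiD, hmin⟩ := D.exists_min_image u hDne
  obtain ⟨hi, hin⟩ := mem_Icc.1 (mem_filter.1 hiD).1
  have hwi : w i < u i := lt_of_le_of_ne (hle i hi hin) (Ne.symm (mem_filter.1 hiD).2)
  have hagree : ∀ k : ℤ, 1 ≤ k → k ≤ n → u k < u i → w k = u k := fun k hk hkn hlt => by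
    by_contra h
    exact (hmin k (mem_filter.2 ⟨mem_Icc.2 ⟨hk, hkn⟩, Ne.symm h⟩)).not_gt hlt
  rcases (hu.apply_ne_zero (show i ≠ 0 by omega)).lt_or_gt with hneg | hpos
  · obtain ⟨j, hj, hjn, hsum, hij, hji⟩ :=
      hu.exists_partner_of_agree_below hw hle hi hin hagree hwi hneg
    obtain ⟨v, hstep, hv, hval⟩ :=
      hu.exists_extPStepB_pair hi hin hj hjn (by rintro rfl; omega) hsum
    refine ⟨v, hstep, hv, fun k hk hkn => ?_⟩
    rw [hval k hk]
    simp only [update_apply]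
    split_ifs <;> subst_vars <;> first | omega | exact hle _ hk hkn
  · have hwi' := hu.le_neg_of_agree_below hw hi hin hagree hwi hpos
    obtain ⟨v, hstep, hv, hval⟩ := hu.exists_extPStepB_self hi hin hpos
    refine ⟨v, hstep, hv, fun k hk hkn => ?_⟩
    rw [hval k hk]
    simp only [update_apply]
    split_ifs <;> subst_vars <;> first | omega | exact hle _ hk hkn

end Descent

theorem IsSigned.extPLEB_of_le {n : ℕ} {u w : Perm ℤ} (hu : IsSigned n u) (hw : IsSigned n w)
    (hle : ∀ k : ℤ, 1 ≤ k → k ≤ n → w k ≤ u k) : extPLEB n u w := by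
  by_cases huw : u = w
  · exact huw ▸ .refl
  obtain ⟨v, hstep, hv, hlev⟩ := hu.exists_extPStepB_of_le hw hle huw
  exact .head hstep (hv.extPLEB_of_le hw hlev)
termination_by 2 * n ^ 2 - lenB n u
decreasing_by
  have := hstep.lenB_lt
  have := lenB_le (n := n) v
  omega

theorem extPLEB_iff (n : ℕ) (u w : Perm ℤ) (hu : IsSigned n u) (hw : IsSigned n w) :
    extPLEB n u w ↔ ∀ i : ℤ, 1 ≤ i → i ≤ (n : ℤ) → w i ≤ u i :=
  ⟨hu.le_of_extPLEB, hu.extPLEB_of_le hw⟩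
end
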